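/- Let B ∈ ℝ^{n×n} be positive definite (x·Bx > 0 for all x ≠ 0, not necessarily symmetric) and let B₀ ∈ ℝ^{n×n} be symmetric positive definite. Suppose there exist c₁, c₂ > 0 with x·Bx ≥ c₁ x·B₀x for all x and x·By ≤ c₂ (x·B₀x)^{1/2}(y·B₀y)^{1/2} for all x, y. Then x·B⁻¹x ≥ (c₁/c₂²) x·B₀⁻¹x for all x, and x·B⁻¹y ≤ c₁⁻¹ (x·B₀⁻¹x)^{1/2}(y·B₀⁻¹y)^{1/2} for all x, y. -/

import Mathlib

/-!
Write `‖v‖_M = √(v ⬝ᵥ M v)`. For `u = B⁻¹ x`, coercivity gives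
`x ⬝ᵥ B⁻¹ x = u ⬝ᵥ B u ≥ c₁ ‖u‖_{B₀}²`. The two norms are dual to each other:
`x ⬝ᵥ u ≤ ‖x‖_{B₀⁻¹} ‖u‖_{B₀}` (Cauchy–Schwarz for `B₀` at `B₀⁻¹ x`). Testing the boundedness of
`B` against `w = B₀⁻¹ x` gives `‖x‖_{B₀⁻¹}² = w ⬝ᵥ B u ≤ c₂ ‖x‖_{B₀⁻¹} ‖u‖_{B₀}`, whence the lower
bound; and `c₁ ‖u‖_{B₀}² ≤ u ⬝ᵥ B u = y ⬝ᵥ u ≤ ‖y‖_{B₀⁻¹} ‖u‖_{B₀}` for `u = B⁻¹ y` bounds `B⁻¹`.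
-/

open Matrix

theorem le_sq_mul_of_le_mul_sqrt_mul_sqrt {a b c : ℝ} (ha : 0 ≤ a) (hb : 0 ≤ b)
    (h : a ≤ c * √a * √b) : a ≤ c ^ 2 * b := by
  rw [← Real.sq_sqrt ha, ← Real.sq_sqrt hb, ← mul_pow]
  rcases (Real.sqrt_nonneg a).eq_or_lt with ha0 | ha0
  · rw [← ha0, sq, zero_mul]
    positivity
  · have : √a ≤ c * √b :=
      le_of_mul_le_mul_right (by nlinarith [Real.mul_self_sqrt ha]) ha0
    exact pow_le_pow_left₀ ha0.le this 2

theorem le_inv_mul_of_mul_sq_le_mul {c q t : ℝ} (hc : 0 < c) (hq : 0 ≤ q)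
    (h : c * t ^ 2 ≤ q * t) : t ≤ c⁻¹ * q := by
  rcases le_or_gt t 0 with ht | ht
  · exact ht.trans (by positivity)
  · rw [le_inv_mul_iff₀ hc]
    exact le_of_mul_le_mul_right (by nlinarith) ht

namespace Matrix

variable {ι : Type*} [Fintype ι]

theorem isUnit_of_dotProduct_mulVec_pos [DecidableEq ι] {K : Type*} [Field K] [LinearOrder K]
    [IsStrictOrderedRing K] {A : Matrix ι ι K} (hA : ∀ x, x ≠ 0 → 0 < x ⬝ᵥ (A *ᵥ x)) :
    IsUnit A := by
  refine mulVec_injective_iff_isUnit.mp fun x y hxy => ?_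
  by_contra hne
  have := hA (x - y) (sub_ne_zero.mpr hne)
  rw [mulVec_sub, hxy, sub_self, dotProduct_zero] at this
  exact this.false

theorem mulVec_inv_mulVec_of_isUnit [DecidableEq ι] {R : Type*} [CommRing R]
    {A : Matrix ι ι R} (hA : IsUnit A) (x : ι → R) : A *ᵥ (A⁻¹ *ᵥ x) = x := by
  rw [mulVec_mulVec, mul_nonsing_inv A ((isUnit_iff_isUnit_det A).mp hA), one_mulVec]

theorem IsSymm.dotProduct_mulVec_comm {R : Type*} [CommSemiring R] {A : Matrix ι ι R}
    (hA : A.IsSymm) (x y : ι → R) : x ⬝ᵥ (A *ᵥ y) = y ⬝ᵥ (A *ᵥ x) := by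
  rw [dotProduct_mulVec, ← mulVec_transpose, hA.eq, dotProduct_comm]

theorem PosSemidef.dotProduct_mulVec_self_nonneg {R : Type*} [CommRing R] [PartialOrder R]
    [StarRing R] [TrivialStar R] {M : Matrix ι ι R} (hM : M.PosSemidef) (x : ι → R) :
    0 ≤ x ⬝ᵥ (M *ᵥ x) := by
  simpa only [star_trivial] using hM.dotProduct_mulVec_nonneg x

theorem PosSemidef.dotProduct_mulVec_le_sqrt_mul_sqrt {M : Matrix ι ι ℝ} (hM : M.PosSemidef)
    (x y : ι → ℝ) : x ⬝ᵥ (M *ᵥ y) ≤ √(x ⬝ᵥ (M *ᵥ x)) * √(y ⬝ᵥ (M *ᵥ y)) := by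
  classical
  have hsq : (x ⬝ᵥ (M *ᵥ y)) ^ 2 ≤ (x ⬝ᵥ (M *ᵥ x)) * (y ⬝ᵥ (M *ᵥ y)) := by
    rw [sq]
    nth_rw 2 [(isHermitian_iff_isSymm.mp hM.isHermitian).dotProduct_mulVec_comm x y]
    simpa only [toLinearMap₂'_apply'] using
      LinearMap.BilinForm.apply_mul_apply_le_of_forall_zero_le (toLinearMap₂' ℝ M)
      (fun z => by simpa only [toLinearMap₂'_apply'] using hM.dotProduct_mulVec_self_nonneg z) x y
  rw [← Real.sqrt_mul (hM.dotProduct_mulVec_self_nonneg x)]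
  exact (le_abs_self _).trans (Real.abs_le_sqrt hsq)

theorem PosDef.dotProduct_le_sqrt_mul_sqrt [DecidableEq ι] {M : Matrix ι ι ℝ} (hM : M.PosDef)
    (x u : ι → ℝ) : x ⬝ᵥ u ≤ √(x ⬝ᵥ (M⁻¹ *ᵥ x)) * √(u ⬝ᵥ (M *ᵥ u)) := by
  set z := M⁻¹ *ᵥ x
  have hz : M *ᵥ z = x := mulVec_inv_mulVec_of_isUnit hM.isUnit x
  have hsymm : M.IsSymm := isHermitian_iff_isSymm.mp hM.isHermitian
  calc x ⬝ᵥ u = z ⬝ᵥ (M *ᵥ u) := by rw [hsymm.dotProduct_mulVec_comm, hz, dotProduct_comm]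
    _ ≤ √(z ⬝ᵥ (M *ᵥ z)) * √(u ⬝ᵥ (M *ᵥ u)) :=
      hM.posSemidef.dotProduct_mulVec_le_sqrt_mul_sqrt z u
    _ = √(x ⬝ᵥ z) * √(u ⬝ᵥ (M *ᵥ u)) := by rw [hz, dotProduct_comm]

def IsCoerciveWrt (A M : Matrix ι ι ℝ) (c : ℝ) : Prop :=
  ∀ x, c * (x ⬝ᵥ (M *ᵥ x)) ≤ x ⬝ᵥ (A *ᵥ x)

def IsBoundedWrt (A M : Matrix ι ι ℝ) (c : ℝ) : Prop :=
  ∀ x y, x ⬝ᵥ (A *ᵥ y) ≤ c * √(x ⬝ᵥ (M *ᵥ x)) * √(y ⬝ᵥ (M *ᵥ y))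

variable [DecidableEq ι] {M A : Matrix ι ι ℝ} {c₁ c₂ : ℝ}

theorem IsCoerciveWrt.isUnit (hM : M.PosDef) (hc₁ : 0 < c₁) (hA : IsCoerciveWrt A M c₁) :
    IsUnit A :=
  isUnit_of_dotProduct_mulVec_pos fun x hx =>
    (mul_pos hc₁ (by simpa only [star_trivial] using hM.dotProduct_mulVec_pos hx)).trans_le (hA x)

theorem IsCoerciveWrt.inv_of_isBoundedWrt (hM : M.PosDef) (hc₁ : 0 < c₁)
    (hcoer : IsCoerciveWrt A M c₁) (hbdd : IsBoundedWrt A M c₂) :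
    IsCoerciveWrt A⁻¹ M⁻¹ (c₁ / c₂ ^ 2) := by
  intro x
  set u := A⁻¹ *ᵥ x
  set w := M⁻¹ *ᵥ x
  have hu : A *ᵥ u = x := mulVec_inv_mulVec_of_isUnit (hcoer.isUnit hM hc₁) x
  have hw : M *ᵥ w = x := mulVec_inv_mulVec_of_isUnit hM.isUnit x
  have hU := hM.posSemidef.dotProduct_mulVec_self_nonneg u
  have hW : x ⬝ᵥ w = w ⬝ᵥ (M *ᵥ w) := by rw [hw, dotProduct_comm]
  have hWU : x ⬝ᵥ w ≤ c₂ ^ 2 * (u ⬝ᵥ (M *ᵥ u)) := by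
    refine le_sq_mul_of_le_mul_sqrt_mul_sqrt (hM.inv.posSemidef.dotProduct_mulVec_self_nonneg x)
      hU ?_
    calc x ⬝ᵥ w = w ⬝ᵥ (A *ᵥ u) := by rw [hu, dotProduct_comm]
      _ ≤ c₂ * √(w ⬝ᵥ (M *ᵥ w)) * √(u ⬝ᵥ (M *ᵥ u)) := hbdd w u
      _ = c₂ * √(x ⬝ᵥ w) * √(u ⬝ᵥ (M *ᵥ u)) := by rw [hW]
  calc c₁ / c₂ ^ 2 * (x ⬝ᵥ w) = c₁ * (x ⬝ᵥ w / c₂ ^ 2) := by ring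
    _ ≤ c₁ * (u ⬝ᵥ (M *ᵥ u)) :=
      mul_le_mul_of_nonneg_left (div_le_of_le_mul₀ (sq_nonneg c₂) hU (by linarith)) hc₁.le
    _ ≤ u ⬝ᵥ (A *ᵥ u) := hcoer u
    _ = x ⬝ᵥ u := by rw [hu, dotProduct_comm]

theorem IsCoerciveWrt.isBoundedWrt_inv (hM : M.PosDef) (hc₁ : 0 < c₁)
    (hcoer : IsCoerciveWrt A M c₁) : IsBoundedWrt A⁻¹ M⁻¹ c₁⁻¹ := by
  intro x y
  set u := A⁻¹ *ᵥ y
  have hu : A *ᵥ u = y := mulVec_inv_mulVec_of_isUnit (hcoer.isUnit hM hc₁) y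
  have hU : √(u ⬝ᵥ (M *ᵥ u)) ≤ c₁⁻¹ * √(y ⬝ᵥ (M⁻¹ *ᵥ y)) := by
    refine le_inv_mul_of_mul_sq_le_mul hc₁ (Real.sqrt_nonneg _) ?_
    rw [Real.sq_sqrt (hM.posSemidef.dotProduct_mulVec_self_nonneg u)]
    calc c₁ * (u ⬝ᵥ (M *ᵥ u)) ≤ u ⬝ᵥ (A *ᵥ u) := hcoer u
      _ = y ⬝ᵥ u := by rw [hu, dotProduct_comm]
      _ ≤ √(y ⬝ᵥ (M⁻¹ *ᵥ y)) * √(u ⬝ᵥ (M *ᵥ u)) := hM.dotProduct_le_sqrt_mul_sqrt y u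
  calc x ⬝ᵥ u ≤ √(x ⬝ᵥ (M⁻¹ *ᵥ x)) * √(u ⬝ᵥ (M *ᵥ u)) := hM.dotProduct_le_sqrt_mul_sqrt x u
    _ ≤ √(x ⬝ᵥ (M⁻¹ *ᵥ x)) * (c₁⁻¹ * √(y ⬝ᵥ (M⁻¹ *ᵥ y))) := by gcongr
    _ = c₁⁻¹ * √(x ⬝ᵥ (M⁻¹ *ᵥ x)) * √(y ⬝ᵥ (M⁻¹ *ᵥ y)) := by ring

end Matrix

theorem stmt4_general (n : ℕ) (B B₀ : Matrix (Fin n) (Fin n) ℝ)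
    (hB₀ : B₀.PosDef)
    (c₁ c₂ : ℝ) (hc₁ : 0 < c₁)
    (h1 : ∀ x : Fin n → ℝ, c₁ * (x ⬝ᵥ (B₀ *ᵥ x)) ≤ x ⬝ᵥ (B *ᵥ x))
    (h2 : ∀ x y : Fin n → ℝ, x ⬝ᵥ (B *ᵥ y) ≤
      c₂ * Real.sqrt (x ⬝ᵥ (B₀ *ᵥ x)) * Real.sqrt (y ⬝ᵥ (B₀ *ᵥ y))) :
    (∀ x : Fin n → ℝ, (c₁ / c₂^2) * (x ⬝ᵥ (B₀⁻¹ *ᵥ x)) ≤ x ⬝ᵥ (B⁻¹ *ᵥ x)) ∧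
    (∀ x y : Fin n → ℝ, x ⬝ᵥ (B⁻¹ *ᵥ y) ≤
      c₁⁻¹ * Real.sqrt (x ⬝ᵥ (B₀⁻¹ *ᵥ x)) * Real.sqrt (y ⬝ᵥ (B₀⁻¹ *ᵥ y))) :=
  ⟨IsCoerciveWrt.inv_of_isBoundedWrt hB₀ hc₁ h1 h2, IsCoerciveWrt.isBoundedWrt_inv hB₀ hc₁ h1⟩

/-- Spectral bounds transfer to inverses (Lemma A.3 / [ABV14, Lemma 3.1]). -/
theorem stmt4 (n : ℕ) (B B₀ : Matrix (Fin n) (Fin n) ℝ)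
    (hB : ∀ x : Fin n → ℝ, x ≠ 0 → 0 < x ⬝ᵥ (B *ᵥ x))
    (hB₀ : B₀.PosDef)
    (c₁ c₂ : ℝ) (hc₁ : 0 < c₁) (hc₂ : 0 < c₂)
    (h1 : ∀ x : Fin n → ℝ, c₁ * (x ⬝ᵥ (B₀ *ᵥ x)) ≤ x ⬝ᵥ (B *ᵥ x))
    (h2 : ∀ x y : Fin n → ℝ, x ⬝ᵥ (B *ᵥ y) ≤
      c₂ * Real.sqrt (x ⬝ᵥ (B₀ *ᵥ x)) * Real.sqrt (y ⬝ᵥ (B₀ *ᵥ y))) :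
    (∀ x : Fin n → ℝ, (c₁ / c₂^2) * (x ⬝ᵥ (B₀⁻¹ *ᵥ x)) ≤ x ⬝ᵥ (B⁻¹ *ᵥ x)) ∧
    (∀ x y : Fin n → ℝ, x ⬝ᵥ (B⁻¹ *ᵥ y) ≤
      c₁⁻¹ * Real.sqrt (x ⬝ᵥ (B₀⁻¹ *ᵥ x)) * Real.sqrt (y ⬝ᵥ (B₀⁻¹ *ᵥ y))) :=
  stmt4_general n B B₀ hB₀ c₁ c₂ hc₁ h1 h2
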